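/- Any regular non-null smooth curve admits, locally, a reparametrization satisfying the tangential part of the conformal circle equation: there exists a new parameter σ such that ⟨∇_{γ'}∇_{γ'}γ', γ'⟩ = 3⟨γ',∇_{γ'}γ'⟩²/⟨γ',γ'⟩ − (3/2)⟨∇_{γ'}γ',∇_{γ'}γ'⟩ + ⟨γ',γ'⟩P(γ',γ') − 2P(γ',γ')⟨γ',γ'⟩ holds, where derivatives are with respect to σ. (It suffices to prove local solvability of the resulting third-order ODE for the reparametrization τ(σ).) -/

import Mathlib

/-!
For `c = γ ∘ τ` one has `c' = τ' γ'`, `c'' = τ'' γ' + τ'² γ''` and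
`c''' = τ''' γ' + 3 τ' τ'' γ'' + τ'³ γ'''`. Pairing with `c'`, the tangential conformal circle
equation for `c` becomes the Schwarzian equation `τ' τ''' - (3/2) τ''² = τ'⁴ κ(τ)`, where `κ` is
the defect of `γ` itself in that equation, divided by `⟨γ', γ'⟩`. As long as `τ' ≠ 0` this is a
`C¹` third-order ODE `τ''' = F(τ, τ', τ'')`, so Picard–Lindelöf gives a local solution with the
prescribed initial data, and `τ'` stays positive near `0`.
-/

open scoped RealInnerProductSpace Topology
open Set Filter

section Calculus

variable {E F : Type*} [NormedAddCommGroup E] [NormedSpace ℝ E]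
  [NormedAddCommGroup F] [NormedSpace ℝ F]

theorem HasDerivAt.fst {f : ℝ → E × F} {f' : E × F} {t : ℝ} (h : HasDerivAt f f' t) :
    HasDerivAt (fun s => (f s).1) f'.1 t :=
  (hasFDerivAt_fst (p := f t)).comp_hasDerivAt t h

theorem HasDerivAt.snd {f : ℝ → E × F} {f' : E × F} {t : ℝ} (h : HasDerivAt f f' t) :
    HasDerivAt (fun s => (f s).2) f'.2 t :=
  (hasFDerivAt_snd (p := f t)).comp_hasDerivAt t h

theorem exists_hasDerivAt_third_order [CompleteSpace E] {G : E → E → E → E} {a₀ a₁ a₂ : E}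
    (hG : ContDiffAt ℝ 1 (fun p : E × E × E => G p.1 p.2.1 p.2.2) (a₀, a₁, a₂)) :
    ∃ y y₁ y₂ : ℝ → E, y 0 = a₀ ∧ y₁ 0 = a₁ ∧ y₂ 0 = a₂ ∧
      ∀ᶠ t in 𝓝 0, HasDerivAt y (y₁ t) t ∧ HasDerivAt y₁ (y₂ t) t ∧
        HasDerivAt y₂ (G (y t) (y₁ t) (y₂ t)) t := by
  have hW : ContDiffAt ℝ 1 (fun p : E × E × E => (p.2.1, p.2.2, G p.1 p.2.1 p.2.2))
      (a₀, a₁, a₂) := by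
    fun_prop
  obtain ⟨α, hα₀, ε, hε, hα⟩ :=
    hW.exists_forall_mem_closedBall_exists_eq_forall_mem_Ioo_hasDerivAt₀ 0
  refine ⟨fun t => (α t).1, fun t => (α t).2.1, fun t => (α t).2.2,
    by simp [hα₀], by simp [hα₀], by simp [hα₀], ?_⟩
  filter_upwards [Ioo_mem_nhds (by linarith : (0 : ℝ) - ε < 0) (by linarith : (0 : ℝ) < 0 + ε)]
    with t ht
  have h := hα t ht
  exact ⟨h.fst, h.snd.fst, h.snd.snd⟩

theorem hasDerivAt_smul_comp {g : ℝ → F} {τ a : ℝ → ℝ} {τ₁ a₁ t : ℝ}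
    (hg : DifferentiableAt ℝ g (τ t)) (hτ : HasDerivAt τ τ₁ t) (ha : HasDerivAt a a₁ t) :
    HasDerivAt (fun s => a s • g (τ s)) (a₁ • g (τ t) + (a t * τ₁) • deriv g (τ t)) t :=
  (ha.smul (hg.hasDerivAt.scomp t hτ)).congr_deriv (by rw [Function.comp_apply]; module)

theorem eqOn_deriv_of_hasDerivAt {f g g' : ℝ → F} {U : Set ℝ} (hfg : EqOn f g U)
    (hU : IsOpen U) (hg : ∀ t ∈ U, HasDerivAt g (g' t) t) : EqOn (deriv f) g' U :=
  fun t ht => (hfg.deriv hU ht).trans (hg t ht).deriv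

theorem eqOn_iteratedDeriv_comp {γ : ℝ → F} (hγ : ContDiff ℝ 3 γ) {τ τ₁ τ₂ τ₃ : ℝ → ℝ}
    {U : Set ℝ} (hU : IsOpen U)
    (hτ : ∀ t ∈ U, HasDerivAt τ (τ₁ t) t ∧ HasDerivAt τ₁ (τ₂ t) t ∧ HasDerivAt τ₂ (τ₃ t) t) :
    EqOn (deriv (γ ∘ τ)) (fun t => τ₁ t • deriv γ (τ t)) U ∧
    EqOn (iteratedDeriv 2 (γ ∘ τ))
      (fun t => τ₂ t • deriv γ (τ t) + τ₁ t ^ 2 • iteratedDeriv 2 γ (τ t)) U ∧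
    EqOn (iteratedDeriv 3 (γ ∘ τ))
      (fun t => τ₃ t • deriv γ (τ t) + (3 * τ₁ t * τ₂ t) • iteratedDeriv 2 γ (τ t)
        + τ₁ t ^ 3 • iteratedDeriv 3 γ (τ t)) U := by
  have hdiff (k : ℕ) (hk : k < 3) : Differentiable ℝ (iteratedDeriv k γ) :=
    hγ.differentiable_iteratedDeriv k (by exact_mod_cast hk)
  have hd₀ : Differentiable ℝ γ := by simpa using hdiff 0 (by norm_num)
  have hd₁ : Differentiable ℝ (deriv γ) := by simpa using hdiff 1 (by norm_num)
  have hd₂ := hdiff 2 (by norm_num)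
  have h₂ : deriv (deriv γ) = iteratedDeriv 2 γ := by
    rw [iteratedDeriv_succ, iteratedDeriv_one]
  have h₃ : deriv (iteratedDeriv 2 γ) = iteratedDeriv 3 γ := iteratedDeriv_succ.symm
  have hc₁ : EqOn (deriv (γ ∘ τ)) (fun t => τ₁ t • deriv γ (τ t)) U :=
    fun t ht => ((hd₀ (τ t)).hasDerivAt.scomp t (hτ t ht).1).deriv
  have hc₂ : EqOn (iteratedDeriv 2 (γ ∘ τ))
      (fun t => τ₂ t • deriv γ (τ t) + τ₁ t ^ 2 • iteratedDeriv 2 γ (τ t)) U := by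
    rw [iteratedDeriv_succ, iteratedDeriv_one]
    refine eqOn_deriv_of_hasDerivAt hc₁ hU fun t ht => ?_
    refine (hasDerivAt_smul_comp (hd₁ (τ t)) (hτ t ht).1 (hτ t ht).2.1).congr_deriv ?_
    rw [h₂]
    module
  refine ⟨hc₁, hc₂, ?_⟩
  rw [iteratedDeriv_succ]
  refine eqOn_deriv_of_hasDerivAt hc₂ hU fun t ht => ?_
  obtain ⟨hτ₀, hτ₁, hτ₂⟩ := hτ t ht
  refine ((hasDerivAt_smul_comp (hd₁ (τ t)) hτ₀ hτ₂).add
    (hasDerivAt_smul_comp (hd₂ (τ t)) hτ₀ (hτ₁.pow 2))).congr_deriv ?_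
  rw [h₂, h₃, Pi.pow_apply]
  module

end Calculus

section TangentialEquation

variable {F : Type*} [NormedAddCommGroup F] [InnerProductSpace ℝ F]

noncomputable def tangentialDefect (v a j : F) : ℝ :=
  (3 * ⟪v, a⟫ ^ 2 / ⟪v, v⟫ - (3 / 2) * ⟪a, a⟫ - ⟪j, v⟫) / ⟪v, v⟫

theorem ContDiff.tangentialDefect {n : WithTop ℕ∞} {v a j : ℝ → F} (hv : ContDiff ℝ n v)
    (ha : ContDiff ℝ n a) (hj : ContDiff ℝ n j) (hv₀ : ∀ t, v t ≠ 0) :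
    ContDiff ℝ n (fun t => _root_.tangentialDefect (v t) (a t) (j t)) := by
  have hvv₀ : ∀ t, ⟪v t, v t⟫ ≠ 0 := fun t => inner_self_ne_zero.2 (hv₀ t)
  have hva := hv.inner ℝ ha
  have hvv := hv.inner ℝ hv
  have haa := ha.inner ℝ ha
  have hjv := hj.inner ℝ hv
  unfold _root_.tangentialDefect
  fun_prop (disch := assumption)

theorem inner_jerk_eq_of_schwarzian {v a j : F} (hv : ⟪v, v⟫ ≠ 0) {τ₁ τ₂ τ₃ : ℝ}
    (hτ₁ : τ₁ ≠ 0) (hS : τ₁ * τ₃ = 3 / 2 * τ₂ ^ 2 + τ₁ ^ 4 * tangentialDefect v a j) :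
    ⟪τ₃ • v + (3 * τ₁ * τ₂) • a + τ₁ ^ 3 • j, τ₁ • v⟫
      = 3 * ⟪τ₁ • v, τ₂ • v + τ₁ ^ 2 • a⟫ ^ 2 / ⟪τ₁ • v, τ₁ • v⟫
        - (3 / 2) * ⟪τ₂ • v + τ₁ ^ 2 • a, τ₂ • v + τ₁ ^ 2 • a⟫ := by
  unfold tangentialDefect at hS
  simp only [inner_add_left, inner_add_right, real_inner_smul_left, real_inner_smul_right,
    real_inner_comm v a] at hS ⊢
  field_simp at hS ⊢
  linear_combination hS

end TangentialEquation

theorem stmt10 (n : ℕ)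
    (γ : ℝ → EuclideanSpace ℝ (Fin n)) (hγ : ContDiff ℝ (⊤ : ℕ∞) γ)
    (hreg : ∀ t, deriv γ t ≠ 0)
    (a0 a1 a2 : ℝ) (ha1 : 0 < a1) :
    ∃ ε > (0:ℝ), ∃ τ : ℝ → ℝ,
      τ 0 = a0 ∧ deriv τ 0 = a1 ∧ deriv (deriv τ) 0 = a2 ∧
      ∀ s ∈ Set.Ioo (-ε) ε, 0 < deriv τ s ∧
        ⟪iteratedDeriv 3 (γ ∘ τ) s, deriv (γ ∘ τ) s⟫
          = 3 * ⟪deriv (γ ∘ τ) s, iteratedDeriv 2 (γ ∘ τ) s⟫ ^ 2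
              / ⟪deriv (γ ∘ τ) s, deriv (γ ∘ τ) s⟫
            - (3/2) * ⟪iteratedDeriv 2 (γ ∘ τ) s, iteratedDeriv 2 (γ ∘ τ) s⟫ := by
  have hγ' (k : ℕ) : ContDiff ℝ 1 (iteratedDeriv k γ) := by
    rw [iteratedDeriv_eq_iterate]
    exact (hγ.iterate_deriv k).of_le (by norm_cast)
  set κ : ℝ → ℝ := fun t =>
    tangentialDefect (deriv γ t) (iteratedDeriv 2 γ t) (iteratedDeriv 3 γ t)
  have hκ : ContDiff ℝ 1 κ :=
    ContDiff.tangentialDefect (by simpa using hγ' 1) (hγ' 2) (hγ' 3) hreg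
  have hG : ContDiffAt ℝ 1
      (fun p : ℝ × ℝ × ℝ => (3 / 2 * p.2.2 ^ 2 + p.2.1 ^ 4 * κ p.1) / p.2.1) (a0, a1, a2) := by
    fun_prop (disch := simpa using ha1.ne')
  obtain ⟨τ, τ₁, τ₂, hτ₀, hτ₁₀, hτ₂₀, hτ⟩ := exists_hasDerivAt_third_order
    (G := fun y y₁ y₂ => (3 / 2 * y₂ ^ 2 + y₁ ^ 4 * κ y) / y₁) hG
  have hpos : ∀ᶠ t in 𝓝 0, 0 < τ₁ t :=
    hτ.self_of_nhds.2.1.continuousAt.eventually (eventually_gt_nhds (hτ₁₀ ▸ ha1))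
  obtain ⟨ε, hε, hU⟩ := Metric.eventually_nhds_iff_ball.1 (hτ.and hpos)
  rw [Real.ball_zero_eq_Ioo] at hU
  have hτ' : EqOn (deriv τ) τ₁ (Ioo (-ε) ε) := fun t ht => (hU t ht).1.1.deriv
  have hτ'' : EqOn (deriv (deriv τ)) τ₂ (Ioo (-ε) ε) :=
    eqOn_deriv_of_hasDerivAt hτ' isOpen_Ioo fun t ht => (hU t ht).1.2.1
  obtain ⟨hc₁, hc₂, hc₃⟩ := eqOn_iteratedDeriv_comp (hγ.of_le (by norm_cast)) isOpen_Ioo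
    fun t ht => (hU t ht).1
  have h0 : (0 : ℝ) ∈ Ioo (-ε) ε := ⟨neg_lt_zero.2 hε, hε⟩
  refine ⟨ε, hε, τ, hτ₀, (hτ' h0).trans hτ₁₀, (hτ'' h0).trans hτ₂₀, fun s hs => ?_⟩
  have hτ₁s : 0 < τ₁ s := (hU s hs).2
  refine ⟨hτ' hs ▸ hτ₁s, ?_⟩
  rw [hc₁ hs, hc₂ hs, hc₃ hs]
  exact inner_jerk_eq_of_schwarzian (inner_self_ne_zero.2 (hreg _)) hτ₁s.ne'
    (mul_div_cancel₀ _ hτ₁s.ne')
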